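/- Let k, l be positive integers and let 𝔤 be a real Lie algebra of dimension 2l + 2k with a basis X₁, …, X_{2l}, X_{2l+1}, …, X_{2l+2k} whose bracket relations on basis elements are ⁅X_{2l+2i}, X_{2j−1}⁆ = −X_{2j} and ⁅X_{2l+2i}, X_{2j}⁆ = X_{2j−1} for all 1 ≤ i ≤ k and 1 ≤ j ≤ l, with all other brackets of basis elements vanishing. Let J be the linear endomorphism of 𝔤 with JX_{2j−1} = X_{2j}, JX_{2j} = −X_{2j−1} for 1 ≤ j ≤ l and JX_{2l+2i−1} = X_{2l+2i}, JX_{2l+2i} = −X_{2l+2i−1} for 1 ≤ i ≤ k. Then J ∘ J = −id and the Nijenhuis tensor N_J vanishes identically: N_J(x, y) = 0 for all x, y ∈ 𝔤. -/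

import Mathlib

/-! The Nijenhuis tensor of an almost complex structure `J` is `J`-antilinear in each argument,
so it vanishes as soon as it vanishes on pairs taken from a family `v` such that the `v a` and
`J (v a)` exhaust a basis. Here `v` is the family of odd-indexed basis vectors, and the only
nontrivial pairs are `(X_{2j-1}, X_{2l+2i-1})`: since `ad X_{2l+2i}` acts as `-J` on the abelian
ideal spanned by `X₁, …, X_{2l}`, the terms `⁅J x, J y⁆` and `J ⁅x, J y⁆` cancel. -/

namespace LieAlgebra

variable {R L : Type*} [CommRing R] [LieRing L] [LieAlgebra R L]

def nijenhuis (J : L →ₗ[R] L) : L →ₗ[R] L →ₗ[R] L :=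
  LinearMap.mk₂ R (fun x y => ⁅J x, J y⁆ - J ⁅J x, y⁆ - J ⁅x, J y⁆ - ⁅x, y⁆)
    (fun x x' y => by simp only [map_add, add_lie]; abel)
    (fun c x y => by simp only [map_smul, smul_lie, smul_sub])
    (fun x y y' => by simp only [map_add, lie_add]; abel)
    (fun c x y => by simp only [map_smul, lie_smul, smul_sub])

variable {J : L →ₗ[R] L}

theorem nijenhuis_apply (x y : L) :
    nijenhuis J x y = ⁅J x, J y⁆ - J ⁅J x, y⁆ - J ⁅x, J y⁆ - ⁅x, y⁆ :=
  rfl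

theorem nijenhuis_swap (x y : L) : nijenhuis J y x = -nijenhuis J x y := by
  simp only [nijenhuis_apply, ← lie_skew (J x), ← lie_skew x, map_neg]
  abel

theorem nijenhuis_apply_left_of_sq (hJ : ∀ x, J (J x) = -x) (x y : L) :
    nijenhuis J (J x) y = -J (nijenhuis J x y) := by
  simp only [nijenhuis_apply, hJ, map_sub, map_neg, neg_lie]
  abel

theorem nijenhuis_apply_right_of_sq (hJ : ∀ x, J (J x) = -x) (x y : L) :
    nijenhuis J x (J y) = -J (nijenhuis J x y) := by
  rw [nijenhuis_swap, nijenhuis_apply_left_of_sq hJ, nijenhuis_swap x y, map_neg, neg_neg]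

theorem nijenhuis_eq_zero_of_basis {ι κ : Type*} (hJ : ∀ x, J (J x) = -x)
    (X : Module.Basis ι R L) (v : κ → L) (hX : ∀ i, ∃ a, X i = v a ∨ X i = J (v a))
    (hv : ∀ a b, nijenhuis J (v a) (v b) = 0) : nijenhuis J = 0 := by
  refine LinearMap.ext_basis X X fun i i' => ?_
  obtain ⟨a, ha | ha⟩ := hX i <;> obtain ⟨b, hb | hb⟩ := hX i' <;>
    simp only [ha, hb, nijenhuis_apply_left_of_sq hJ, nijenhuis_apply_right_of_sq hJ, hv,
      map_zero, neg_zero, LinearMap.zero_apply]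

end LieAlgebra

theorem LinearMap.apply_apply_eq_neg_of_basis {R M ι κ : Type*} [CommRing R] [AddCommGroup M]
    [Module R M] {J : M →ₗ[R] M} (X : Module.Basis ι R M) (v : κ → M)
    (hX : ∀ i, ∃ a, X i = v a ∨ X i = J (v a)) (hv : ∀ a, J (J (v a)) = -v a) (x : M) :
    J (J x) = -x := by
  suffices J ∘ₗ J = -LinearMap.id from LinearMap.congr_fun this x
  refine X.ext fun i => ?_
  obtain ⟨a, ha | ha⟩ := hX i <;> simp [ha, hv]

open LieAlgebra in
theorem stmt13_general (k l : ℕ)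
    (L : Type*) [LieRing L] [LieAlgebra ℝ L]
    (X : Module.Basis ((Fin l × Bool) ⊕ (Fin k × Bool)) ℝ L)
    (hbr1 : ∀ (i : Fin k) (j : Fin l),
      ⁅X (.inr (i, true)), X (.inl (j, false))⁆ = -X (.inl (j, true)))
    (hbr2 : ∀ (i : Fin k) (j : Fin l),
      ⁅X (.inr (i, true)), X (.inl (j, true))⁆ = X (.inl (j, false)))
    (hll : ∀ p q : Fin l × Bool, ⁅X (.inl p), X (.inl q)⁆ = 0)
    (hrr : ∀ p q : Fin k × Bool, ⁅X (.inr p), X (.inr q)⁆ = 0)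
    (hodd : ∀ (i : Fin k) (p : Fin l × Bool), ⁅X (.inr (i, false)), X (.inl p)⁆ = 0)
    (J : L →ₗ[ℝ] L)
    (hJ1 : ∀ j : Fin l, J (X (.inl (j, false))) = X (.inl (j, true)))
    (hJ2 : ∀ j : Fin l, J (X (.inl (j, true))) = -X (.inl (j, false)))
    (hJ3 : ∀ i : Fin k, J (X (.inr (i, false))) = X (.inr (i, true)))
    (hJ4 : ∀ i : Fin k, J (X (.inr (i, true))) = -X (.inr (i, false))) :
    (∀ x : L, J (J x) = -x) ∧
      ∀ x y : L, ⁅J x, J y⁆ - J ⁅J x, y⁆ - J ⁅x, J y⁆ - ⁅x, y⁆ = 0 := by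
  let v : Fin l ⊕ Fin k → L :=
    Sum.elim (fun j => X (.inl (j, false))) (fun i => X (.inr (i, false)))
  have hX : ∀ p, ∃ a, X p = v a ∨ X p = J (v a) := by
    rintro (⟨j, _ | _⟩ | ⟨i, _ | _⟩)
    exacts [⟨.inl j, .inl rfl⟩, ⟨.inl j, .inr (hJ1 j).symm⟩,
      ⟨.inr i, .inl rfl⟩, ⟨.inr i, .inr (hJ3 i).symm⟩]
  have hJJ : ∀ x, J (J x) = -x := by
    refine LinearMap.apply_apply_eq_neg_of_basis X v hX ?_
    rintro (j | i) <;> simp [v, hJ1, hJ2, hJ3, hJ4]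
  have hmixed : ∀ i j, nijenhuis J (v (.inl j)) (v (.inr i)) = 0 := by
    intro i j
    simp [v, nijenhuis_apply, hJ1, hJ2, hJ3, ← lie_skew (X (.inl _)), hbr1, hbr2, hodd]
  have hv : ∀ a b, nijenhuis J (v a) (v b) = 0 := by
    rintro (j | i) (j' | i')
    · simp [v, nijenhuis_apply, hJ1, hll]
    · exact hmixed i' j
    · rw [nijenhuis_swap, hmixed, neg_zero]
    · simp [v, nijenhuis_apply, hJ3, hrr]
  have hN := nijenhuis_eq_zero_of_basis hJJ X v hX hv
  exact ⟨hJJ, fun x y => LinearMap.congr_fun₂ hN x y⟩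

/-- Let `k, l ≥ 1` and let `𝔤` be the real Lie algebra of dimension
`2l + 2k` with basis `X₁, …, X_{2l}, X_{2l+1}, …, X_{2l+2k}` and brackets
`⁅X_{2l+2i}, X_{2j-1}⁆ = -X_{2j}`, `⁅X_{2l+2i}, X_{2j}⁆ = X_{2j-1}` (`1 ≤ i ≤ k`,
`1 ≤ j ≤ l`), all other brackets of basis elements vanishing. Here the basis is indexed by
`(Fin l × Bool) ⊕ (Fin k × Bool)`: `X (.inl (j, false)) = X_{2j-1}`,
`X (.inl (j, true)) = X_{2j}`, `X (.inr (i, false)) = X_{2l+2i-1}`,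
`X (.inr (i, true)) = X_{2l+2i}`. The endomorphism `J` with `JX_{2j-1} = X_{2j}`,
`JX_{2j} = -X_{2j-1}`, `JX_{2l+2i-1} = X_{2l+2i}`, `JX_{2l+2i} = -X_{2l+2i-1}` satisfies
`J² = -id` and has vanishing Nijenhuis tensor. -/
theorem stmt13 (k l : ℕ) (hk : 0 < k) (hl : 0 < l)
    (L : Type*) [LieRing L] [LieAlgebra ℝ L]
    (X : Module.Basis ((Fin l × Bool) ⊕ (Fin k × Bool)) ℝ L)
    (hbr1 : ∀ (i : Fin k) (j : Fin l),
      ⁅X (.inr (i, true)), X (.inl (j, false))⁆ = -X (.inl (j, true)))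
    (hbr2 : ∀ (i : Fin k) (j : Fin l),
      ⁅X (.inr (i, true)), X (.inl (j, true))⁆ = X (.inl (j, false)))
    (hll : ∀ p q : Fin l × Bool, ⁅X (.inl p), X (.inl q)⁆ = 0)
    (hrr : ∀ p q : Fin k × Bool, ⁅X (.inr p), X (.inr q)⁆ = 0)
    (hodd : ∀ (i : Fin k) (p : Fin l × Bool), ⁅X (.inr (i, false)), X (.inl p)⁆ = 0)
    (J : L →ₗ[ℝ] L)
    (hJ1 : ∀ j : Fin l, J (X (.inl (j, false))) = X (.inl (j, true)))
    (hJ2 : ∀ j : Fin l, J (X (.inl (j, true))) = -X (.inl (j, false)))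
    (hJ3 : ∀ i : Fin k, J (X (.inr (i, false))) = X (.inr (i, true)))
    (hJ4 : ∀ i : Fin k, J (X (.inr (i, true))) = -X (.inr (i, false))) :
    (∀ x : L, J (J x) = -x) ∧
      ∀ x y : L, ⁅J x, J y⁆ - J ⁅J x, y⁆ - J ⁅x, J y⁆ - ⁅x, y⁆ = 0 :=
  stmt13_general k l L X hbr1 hbr2 hll hrr hodd J hJ1 hJ2 hJ3 hJ4
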